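/- The triple pattern fragment query (?x,p,?x), returning all p-self-loops, is expressed by the shape fragment for the request shape ¬disj(id,p): for every RDF graph G, Frag(G, {¬disj(id,p)}) = {(v,p,v) ∈ G}. -/

import Mathlib

abbrev Node := ℕ
abbrev Triple := Node × Node × Node
abbrev RDFGraph := Set Triple

inductive PathExpr where
  | prop : Node → PathExpr
  | inv : PathExpr → PathExpr
  | comp : PathExpr → PathExpr → PathExpr
  | union : PathExpr → PathExpr → PathExpr
  | star : PathExpr → PathExpr
  | opt : PathExpr → PathExpr

/-- Evaluation of a path expression on a graph, as a binary relation on nodes. -/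
def evalPE : PathExpr → RDFGraph → Node → Node → Prop
  | .prop p, G, a, b => (a, p, b) ∈ G
  | .inv E, G, a, b => evalPE E G b a
  | .comp E₁ E₂, G, a, b => ∃ c, evalPE E₁ G a c ∧ evalPE E₂ G c b
  | .union E₁ E₂, G, a, b => evalPE E₁ G a b ∨ evalPE E₂ G a b
  | .star E, G, a, b => Relation.ReflTransGen (fun x y => evalPE E G x y) a b
  | .opt E, G, a, b => a = b ∨ evalPE E G a b

/-- A step: a forward triple or a backward (reversed) triple. -/
inductive Step where
  | fwd : Triple → Step
  | bwd : Triple → Step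

/-- The RDF triple underlying a step (reversing backward steps). -/
def Step.triple : Step → Triple
  | .fwd t => t
  | .bwd t => t

def Step.rev : Step → Step
  | .fwd t => .bwd t
  | .bwd t => .fwd t

/-- Reversal of a path. -/
def revPath (π : List Step) : List Step := (π.map Step.rev).reverse

/-- `IsPath E G a b π` : π is a path generated by E in G from a to b. -/
inductive IsPath : PathExpr → RDFGraph → Node → Node → List Step → Prop where
  | prop {p : Node} {G : RDFGraph} {a b : Node} :
      (a, p, b) ∈ G → IsPath (.prop p) G a b [.fwd (a, p, b)]
  | inv {E G a b π} : IsPath E G b a π → IsPath (.inv E) G a b (revPath π)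
  | comp {E₁ E₂ G a c b π₁ π₂} : IsPath E₁ G a c π₁ → IsPath E₂ G c b π₂ →
      IsPath (.comp E₁ E₂) G a b (π₁ ++ π₂)
  | unionL {E₁ E₂ G a b π} : IsPath E₁ G a b π → IsPath (.union E₁ E₂) G a b π
  | unionR {E₁ E₂ G a b π} : IsPath E₂ G a b π → IsPath (.union E₁ E₂) G a b π
  | opt {E G a b π} : IsPath E G a b π → IsPath (.opt E) G a b π
  | starOne {E G a b π} : IsPath E G a b π → IsPath (.star E) G a b π
  | starStep {E G a c b π₁ π₂} : IsPath E G a c π₁ → IsPath (.star E) G c b π₂ →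
      IsPath (.star E) G a b (π₁ ++ π₂)

/-- graph(paths(E,G,a,b)) : the subgraph traced out by all E-paths from a to b. -/
def graphOfPaths (E : PathExpr) (G : RDFGraph) (a b : Node) : RDFGraph :=
  {t | ∃ π, IsPath E G a b π ∧ ∃ st ∈ π, st.triple = t}

/-- graph(paths(E,G)) : the subgraph traced out by all E-paths in G. -/
def graphOfAllPaths (E : PathExpr) (G : RDFGraph) : RDFGraph :=
  {t | ∃ a b, t ∈ graphOfPaths E G a b}

inductive PathOrId where
  | id : PathOrId
  | expr : PathExpr → PathOrId

inductive Shape where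
  | top : Shape
  | bot : Shape
  | test : (Node → Prop) → Shape
  | hasValue : Node → Shape
  | eq : PathOrId → Node → Shape
  | disj : PathOrId → Node → Shape
  | closed : Finset Node → Shape
  | lessThan : PathExpr → Node → Shape
  | lessThanEq : PathExpr → Node → Shape
  | uniqueLang : PathExpr → Shape
  | not : Shape → Shape
  | and : Shape → Shape → Shape
  | or : Shape → Shape → Shape
  | geq : ℕ → PathExpr → Shape → Shape
  | leq : ℕ → PathExpr → Shape → Shape
  | all : PathExpr → Shape → Shape

/-- Context: the strict partial order `<` on literals and the
language-tag equivalence `∼`. -/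
structure Ctx where
  lt : Node → Node → Prop
  sim : Node → Node → Prop

/-- [[F]]_G(v) for F a path expression or `id`. -/
def evalF : PathOrId → RDFGraph → Node → Set Node
  | .id, _, v => {v}
  | .expr E, G, v => {b | evalPE E G v b}

/-- The set of p-successors of v in G. -/
def psucc (G : RDFGraph) (v p : Node) : Set Node := {b | (v, p, b) ∈ G}

/-- Conformance of a focus node to a shape (Table 1). -/
def Conforms (C : Ctx) (G : RDFGraph) : Shape → Node → Prop
  | .top, _ => True
  | .bot, _ => False
  | .test t, v => t v
  | .hasValue c, v => v = c
  | .eq F p, v => evalF F G v = psucc G v p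
  | .disj F p, v => evalF F G v ∩ psucc G v p = ∅
  | .closed P, v => ∀ q b, (v, q, b) ∈ G → q ∈ P
  | .lessThan E p, v => ∀ b c, evalPE E G v b → (v, p, c) ∈ G → C.lt b c
  | .lessThanEq E p, v => ∀ b c, evalPE E G v b → (v, p, c) ∈ G → (C.lt b c ∨ b = c)
  | .uniqueLang E, v => ∀ b c, evalPE E G v b → evalPE E G v c → b ≠ c → ¬ C.sim b c
  | .not φ, v => ¬ Conforms C G φ v
  | .and φ ψ, v => Conforms C G φ v ∧ Conforms C G ψ v
  | .or φ ψ, v => Conforms C G φ v ∨ Conforms C G ψ v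
  | .geq n E ψ, v => ∃ s : Finset Node, s.card = n ∧ ∀ b ∈ s, evalPE E G v b ∧ Conforms C G ψ b
  | .leq n E ψ, v => ∀ s : Finset Node, (∀ b ∈ s, evalPE E G v b ∧ Conforms C G ψ b) → s.card ≤ n
  | .all E ψ, v => ∀ b, evalPE E G v b → Conforms C G ψ b

/-- Atomic shapes. -/
def Shape.Atomic : Shape → Prop
  | .not _ => False
  | .and _ _ => False
  | .or _ _ => False
  | .geq _ _ _ => False
  | .leq _ _ _ => False
  | .all _ _ => False
  | _ => True

/-- Negation normal form: negation applied only to atomic shapes. -/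
def IsNNF : Shape → Prop
  | .not φ => φ.Atomic
  | .and φ ψ => IsNNF φ ∧ IsNNF ψ
  | .or φ ψ => IsNNF φ ∧ IsNNF ψ
  | .geq _ _ ψ => IsNNF ψ
  | .leq _ _ ψ => IsNNF ψ
  | .all _ ψ => IsNNF ψ
  | _ => True

mutual
/-- The φ-neighborhood B(v,G,φ) of a node (Table 2); empty when v does not conform. -/
def B (C : Ctx) (G : RDFGraph) : Shape → Node → RDFGraph
  | .not φ, v => Bneg C G φ v
  | .and φ ψ, v => {t | Conforms C G (.and φ ψ) v ∧ (t ∈ B C G φ v ∨ t ∈ B C G ψ v)}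
  | .or φ ψ, v => {t | Conforms C G (.or φ ψ) v ∧ (t ∈ B C G φ v ∨ t ∈ B C G ψ v)}
  | .geq n E ψ, v => {t | Conforms C G (.geq n E ψ) v ∧
      ∃ x, evalPE E G v x ∧ Conforms C G ψ x ∧ (t ∈ graphOfPaths E G v x ∨ t ∈ B C G ψ x)}
  | .leq n E ψ, v => {t | Conforms C G (.leq n E ψ) v ∧
      ∃ x, evalPE E G v x ∧ ¬ Conforms C G ψ x ∧ (t ∈ graphOfPaths E G v x ∨ t ∈ Bneg C G ψ x)}
  | .all E ψ, v => {t | Conforms C G (.all E ψ) v ∧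
      ∃ x, evalPE E G v x ∧ (t ∈ graphOfPaths E G v x ∨ t ∈ B C G ψ x)}
  | .eq (.expr E) p, v => {t | Conforms C G (.eq (.expr E) p) v ∧
      ∃ x, t ∈ graphOfPaths (.union E (.prop p)) G v x}
  | .eq .id p, v => {t | Conforms C G (.eq .id p) v ∧ t = (v, p, v)}
  | _, _ => ∅

/-- Neighborhood of v for the negation normal form of ¬φ (Table 2, negated cases). -/
def Bneg (C : Ctx) (G : RDFGraph) : Shape → Node → RDFGraph
  | .not φ, v => B C G φ v
  | .and φ ψ, v => {t | ¬ Conforms C G (.and φ ψ) v ∧ (t ∈ Bneg C G φ v ∨ t ∈ Bneg C G ψ v)}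
  | .or φ ψ, v => {t | ¬ Conforms C G (.or φ ψ) v ∧ (t ∈ Bneg C G φ v ∨ t ∈ Bneg C G ψ v)}
  | .geq n E ψ, v => {t | ¬ Conforms C G (.geq n E ψ) v ∧
      ∃ x, evalPE E G v x ∧ ¬ Conforms C G ψ x ∧ (t ∈ graphOfPaths E G v x ∨ t ∈ Bneg C G ψ x)}
  | .leq n E ψ, v => {t | ¬ Conforms C G (.leq n E ψ) v ∧
      ∃ x, evalPE E G v x ∧ Conforms C G ψ x ∧ (t ∈ graphOfPaths E G v x ∨ t ∈ B C G ψ x)}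
  | .all E ψ, v => {t | ¬ Conforms C G (.all E ψ) v ∧
      ∃ x, evalPE E G v x ∧ ¬ Conforms C G ψ x ∧ (t ∈ graphOfPaths E G v x ∨ t ∈ Bneg C G ψ x)}
  | .eq (.expr E) p, v => {t | ¬ Conforms C G (.eq (.expr E) p) v ∧
      ((∃ x, (v, p, x) ∉ G ∧ t ∈ graphOfPaths E G v x) ∨
       (∃ x, t = (v, p, x) ∧ (v, p, x) ∈ G ∧ ¬ evalPE E G v x))}
  | .eq .id p, v => {t | ¬ Conforms C G (.eq .id p) v ∧
      ∃ x, t = (v, p, x) ∧ (v, p, x) ∈ G ∧ x ≠ v}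
  | .disj (.expr E) p, v => {t | ¬ Conforms C G (.disj (.expr E) p) v ∧
      ∃ x, evalPE E G v x ∧ (v, p, x) ∈ G ∧ (t ∈ graphOfPaths E G v x ∨ t = (v, p, x))}
  | .disj .id p, v => {t | ¬ Conforms C G (.disj .id p) v ∧ t = (v, p, v)}
  | .lessThan E p, v => {t | ¬ Conforms C G (.lessThan E p) v ∧
      ∃ x y, evalPE E G v x ∧ (v, p, y) ∈ G ∧ ¬ C.lt x y ∧
        (t ∈ graphOfPaths E G v x ∨ t = (v, p, y))}
  | .lessThanEq E p, v => {t | ¬ Conforms C G (.lessThanEq E p) v ∧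
      ∃ x y, evalPE E G v x ∧ (v, p, y) ∈ G ∧ ¬ (C.lt x y ∨ x = y) ∧
        (t ∈ graphOfPaths E G v x ∨ t = (v, p, y))}
  | .uniqueLang E, v => {t | ¬ Conforms C G (.uniqueLang E) v ∧
      ∃ y x, evalPE E G v y ∧ evalPE E G v x ∧ x ≠ y ∧ C.sim x y ∧ t ∈ graphOfPaths E G v y}
  | .closed P, v => {t | ¬ Conforms C G (.closed P) v ∧
      ∃ q x, t = (v, q, x) ∧ (v, q, x) ∈ G ∧ q ∉ P}
  | _, _ => ∅
end

/-- The shape fragment of G for a set S of request shapes. -/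
def Frag (C : Ctx) (G : RDFGraph) (S : Set Shape) : RDFGraph :=
  {t | ∃ v φ, φ ∈ S ∧ t ∈ B C G φ v}

/-- A shape definition: name, shape expression, target expression. -/
structure ShapeDef where
  name : Node
  shape : Shape
  target : Shape

/-- G conforms to the schema H. -/
def SchemaConforms (C : Ctx) (G : RDFGraph) (H : List ShapeDef) : Prop :=
  ∀ d ∈ H, ∀ a : Node, Conforms C G d.target a → Conforms C G d.shape a

/-- The request shapes derived from a schema: each shape conjoined with its target. -/
def schemaShapes (H : List ShapeDef) : Set Shape :=
  {φ | ∃ d ∈ H, φ = Shape.and d.shape d.target}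

/-- The shape fragment of G for a schema H. -/
def FragH (C : Ctx) (G : RDFGraph) (H : List ShapeDef) : RDFGraph :=
  Frag C G (schemaShapes H)

/-- A shape is monotone if conformance is preserved under adding triples. -/
def MonotoneShape (C : Ctx) (φ : Shape) : Prop :=
  ∀ G G' : RDFGraph, G ⊆ G' → ∀ v, Conforms C G φ v → Conforms C G' φ v

/-- Properties mentioned in a path expression. -/
def PathExpr.props : PathExpr → Set Node
  | .prop p => {p}
  | .inv E => E.props
  | .comp E₁ E₂ => E₁.props ∪ E₂.props
  | .union E₁ E₂ => E₁.props ∪ E₂.props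
  | .star E => E.props
  | .opt E => E.props

def PathOrId.props : PathOrId → Set Node
  | .id => ∅
  | .expr E => E.props

/-- Properties mentioned in a shape. -/
def Shape.props : Shape → Set Node
  | .top => ∅
  | .bot => ∅
  | .test _ => ∅
  | .hasValue _ => ∅
  | .eq F p => F.props ∪ {p}
  | .disj F p => F.props ∪ {p}
  | .closed P => ↑P
  | .lessThan E p => E.props ∪ {p}
  | .lessThanEq E p => E.props ∪ {p}
  | .uniqueLang E => E.props
  | .not φ => φ.props
  | .and φ ψ => φ.props ∪ ψ.props
  | .or φ ψ => φ.props ∪ ψ.props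
  | .geq _ E ψ => E.props ∪ ψ.props
  | .leq _ E ψ => E.props ∪ ψ.props
  | .all E ψ => E.props ∪ ψ.props

theorem mem_frag_singleton_iff {C : Ctx} {G : RDFGraph} {φ : Shape} {t : Triple} :
    t ∈ Frag C G {φ} ↔ ∃ v, t ∈ B C G φ v := by
  simp [Frag]

theorem conforms_not_disj_id_iff {C : Ctx} {G : RDFGraph} {p v : Node} :
    Conforms C G (.not (.disj .id p)) v ↔ (v, p, v) ∈ G := by
  simp [Conforms, evalF, psucc, Set.eq_empty_iff_forall_notMem]

theorem mem_B_not_disj_id_iff {C : Ctx} {G : RDFGraph} {p v : Node} {t : Triple} :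
    t ∈ B C G (.not (.disj .id p)) v ↔ (v, p, v) ∈ G ∧ t = (v, p, v) := by
  rw [← conforms_not_disj_id_iff (C := C)]
  rfl

/-- the TPF (?x,p,?x) of all p-self-loops is expressed by the
shape fragment for ¬disj(id,p). -/
theorem tpf_selfloop (C : Ctx) (G : RDFGraph) (p : Node) :
    Frag C G {Shape.not (.disj .id p)} = {t ∈ G | t.2.1 = p ∧ t.1 = t.2.2} := by
  ext ⟨a, q, b⟩
  simp only [mem_frag_singleton_iff, mem_B_not_disj_id_iff, Set.mem_ofPred_eq, Prod.mk.injEq]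
  constructor
  · rintro ⟨v, hv, rfl, rfl, rfl⟩
    exact ⟨hv, rfl, rfl⟩
  · rintro ⟨hG, rfl, rfl⟩
    exact ⟨a, hG, rfl, rfl, rfl⟩
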